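/- Let E, F, E₁, F₁ be Banach spaces over 𝕜 (= ℝ or ℂ), m, r, s ≥ 1, R ∈ 𝒫(^rE;F) and B ∈ 𝒫(^sE₁;F₁). Then the composition map S_{RB} : 𝒫(^mF₁;E) → 𝒫(^{mrs}E₁;F), S_{RB}(P) = R ∘ P ∘ B, is well defined and is a continuous r-homogeneous polynomial; in particular ‖S_{RB}(P)‖ ≤ ‖R‖·‖P‖^r·‖B‖^{mr} for every P ∈ 𝒫(^mF₁;E). -/

import Mathlib

open scoped NNReal ENNReal

/-- `P : E → F` is a continuous `m`-homogeneous polynomial: it is generated by a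
continuous `m`-linear map. -/
def IsHomPoly (𝕜 : Type*) [RCLike 𝕜] (m : ℕ) {E F : Type*}
    [NormedAddCommGroup E] [NormedSpace 𝕜 E] [NormedAddCommGroup F] [NormedSpace 𝕜 F]
    (P : E → F) : Prop :=
  ∃ A : ContinuousMultilinearMap 𝕜 (fun _ : Fin m => E) F, ∀ x, P x = A (fun _ => x)

/-- The sup norm over the closed unit ball. -/
noncomputable def polyNorm {E F : Type*} [Norm E] [Norm F] (P : E → F) : ℝ :=
  sSup ((fun x => ‖P x‖) '' {x : E | ‖x‖ ≤ 1})

/-- The space `𝒫(^m E; F)` of continuous `m`-homogeneous polynomials. -/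
structure HPoly (𝕜 : Type*) [RCLike 𝕜] (m : ℕ) (E F : Type*)
    [NormedAddCommGroup E] [NormedSpace 𝕜 E] [NormedAddCommGroup F] [NormedSpace 𝕜 F] where
  toFun : E → F
  isPoly' : IsHomPoly 𝕜 m toFun

namespace HPoly

variable {𝕜 : Type*} [RCLike 𝕜] {m : ℕ} {E F : Type*}
  [NormedAddCommGroup E] [NormedSpace 𝕜 E] [NormedAddCommGroup F] [NormedSpace 𝕜 F]

instance : FunLike (HPoly 𝕜 m E F) E F where
  coe P := P.toFun
  coe_injective := by rintro ⟨f, hf⟩ ⟨g, hg⟩ h; simpa using h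

@[ext] theorem ext {P Q : HPoly 𝕜 m E F} (h : ∀ x, P x = Q x) : P = Q := DFunLike.ext _ _ h

theorem isPoly (P : HPoly 𝕜 m E F) : IsHomPoly 𝕜 m ⇑P := P.isPoly'

instance : Zero (HPoly 𝕜 m E F) := ⟨⟨fun _ => 0, ⟨0, by simp⟩⟩⟩

@[simp] theorem zero_apply (x : E) : (0 : HPoly 𝕜 m E F) x = 0 := rfl

instance : Add (HPoly 𝕜 m E F) :=
  ⟨fun P Q => ⟨fun x => P x + Q x, by
    obtain ⟨A, hA⟩ := P.isPoly'
    obtain ⟨B, hB⟩ := Q.isPoly'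
    refine ⟨A + B, fun x => ?_⟩
    show P.toFun x + Q.toFun x = (A + B) fun _ => x
    rw [ContinuousMultilinearMap.add_apply, hA x, hB x]⟩⟩

@[simp] theorem add_apply (P Q : HPoly 𝕜 m E F) (x : E) : (P + Q) x = P x + Q x := rfl

instance : Neg (HPoly 𝕜 m E F) :=
  ⟨fun P => ⟨fun x => -P x, by
    obtain ⟨A, hA⟩ := P.isPoly'
    refine ⟨-A, fun x => ?_⟩
    show -P.toFun x = (-A) fun _ => x
    rw [ContinuousMultilinearMap.neg_apply, hA x]⟩⟩

@[simp] theorem neg_apply (P : HPoly 𝕜 m E F) (x : E) : (-P) x = -P x := rfl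

instance : SMul 𝕜 (HPoly 𝕜 m E F) :=
  ⟨fun c P => ⟨fun x => c • P x, by
    obtain ⟨A, hA⟩ := P.isPoly'
    refine ⟨c • A, fun x => ?_⟩
    show c • P.toFun x = (c • A) fun _ => x
    rw [ContinuousMultilinearMap.smul_apply, hA x]⟩⟩

@[simp] theorem smul_apply (c : 𝕜) (P : HPoly 𝕜 m E F) (x : E) : (c • P) x = c • P x := rfl

instance : AddCommGroup (HPoly 𝕜 m E F) where
  add_assoc P Q R := by ext x; simp [add_assoc]
  zero_add P := by ext x; simp
  add_zero P := by ext x; simp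
  add_comm P Q := by ext x; simp [add_comm]
  neg_add_cancel P := by ext x; simp
  nsmul := nsmulRec
  zsmul := zsmulRec

instance : Module 𝕜 (HPoly 𝕜 m E F) where
  one_smul P := by ext x; simp
  mul_smul a b P := by ext x; simp [mul_smul]
  smul_zero a := by ext x; simp
  smul_add a P Q := by ext x; simp
  add_smul a b P := by ext x; simp [add_smul]
  zero_smul P := by ext x; simp

theorem bddAbove_image (P : HPoly 𝕜 m E F) :
    BddAbove ((fun x => ‖P x‖) '' {x : E | ‖x‖ ≤ 1}) := by
  obtain ⟨A, hA⟩ := P.isPoly'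
  refine ⟨‖A‖, ?_⟩
  rintro r ⟨x, hx, rfl⟩
  show ‖P.toFun x‖ ≤ ‖A‖
  rw [hA x]
  calc ‖A fun _ => x‖ ≤ ‖A‖ * ∏ _i : Fin m, ‖x‖ := A.le_opNorm _
    _ ≤ ‖A‖ * 1 := by
        refine mul_le_mul_of_nonneg_left ?_ (norm_nonneg A)
        rw [Finset.prod_const]
        exact pow_le_one₀ (norm_nonneg x) hx
    _ = ‖A‖ := mul_one _

theorem polyNorm_coe_nonneg (P : HPoly 𝕜 m E F) : 0 ≤ polyNorm ⇑P :=
  le_trans (norm_nonneg (P 0)) (le_csSup (bddAbove_image P) ⟨0, by simp, rfl⟩)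

noncomputable instance : NormedAddCommGroup (HPoly 𝕜 m E F) :=
  AddGroupNorm.toNormedAddCommGroup
    { toFun := fun P => polyNorm (⇑P)
      map_zero' := by
        simp only [polyNorm]
        have h : (fun x : E => ‖(0 : HPoly 𝕜 m E F) x‖) '' {x : E | ‖x‖ ≤ 1} = {0} := by
          apply Set.eq_singleton_iff_nonempty_unique_mem.2
          constructor
          · exact ⟨0, ⟨0, by simp, by simp⟩⟩
          · rintro r ⟨x, -, rfl⟩; simp
        rw [h, csSup_singleton]
      add_le' := fun P Q => by
        apply Real.sSup_le
        · rintro r ⟨x, hx, rfl⟩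
          calc ‖(P + Q) x‖ ≤ ‖P x‖ + ‖Q x‖ := norm_add_le _ _
            _ ≤ polyNorm ⇑P + polyNorm ⇑Q :=
                add_le_add (le_csSup (bddAbove_image P) ⟨x, hx, rfl⟩)
                  (le_csSup (bddAbove_image Q) ⟨x, hx, rfl⟩)
        · exact add_nonneg (polyNorm_coe_nonneg P) (polyNorm_coe_nonneg Q)
      neg' := fun P => by simp [polyNorm]
      eq_zero_of_map_eq_zero' := fun P h => by
        have h' : polyNorm ⇑P = 0 := h
        have hball : ∀ x : E, ‖x‖ ≤ 1 → P x = 0 := by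
          intro x hx
          have h1 : ‖P x‖ ≤ polyNorm ⇑P := le_csSup (bddAbove_image P) ⟨x, hx, rfl⟩
          rw [h'] at h1
          exact norm_le_zero_iff.1 h1
        ext x
        rcases eq_or_ne x 0 with rfl | hx
        · simpa using hball 0 (by simp)
        · obtain ⟨A, hA⟩ := P.isPoly'
          set c : 𝕜 := ((‖x‖ : ℝ) : 𝕜) with hcdef
          have hc : c ≠ 0 := by
            simp only [hcdef, ne_eq, RCLike.ofReal_eq_zero]
            exact norm_ne_zero_iff.2 hx
          have hu : ‖(c⁻¹ • x : E)‖ ≤ 1 := by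
            rw [norm_smul, norm_inv, hcdef, RCLike.norm_ofReal,
              abs_of_nonneg (norm_nonneg x),
              inv_mul_cancel₀ (norm_ne_zero_iff.2 hx)]
          have h0 : P (c⁻¹ • x) = 0 := hball _ hu
          have key : P x = c ^ m • P (c⁻¹ • x) := by
            show P.toFun x = c ^ m • P.toFun (c⁻¹ • x)
            rw [hA x, hA (c⁻¹ • x)]
            have h2 := A.map_smul_univ (fun _ : Fin m => c) (fun _ : Fin m => c⁻¹ • x)
            rw [Finset.prod_const] at h2
            have h3 : (fun _ : Fin m => c • c⁻¹ • x) = fun _ : Fin m => x := by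
              funext i
              rw [smul_smul, mul_inv_cancel₀ hc, one_smul]
            rw [h3] at h2
            simpa using h2
          rw [key, h0, smul_zero]
          simp }

theorem norm_def (P : HPoly 𝕜 m E F) : ‖P‖ = polyNorm ⇑P := rfl

noncomputable instance : NormedSpace 𝕜 (HPoly 𝕜 m E F) :=
  { (inferInstance : Module 𝕜 (HPoly 𝕜 m E F)) with
    norm_smul_le := fun c P => by
      show polyNorm ⇑(c • P) ≤ ‖c‖ * polyNorm ⇑P
      apply Real.sSup_le
      · rintro r ⟨x, hx, rfl⟩
        show ‖(c • P) x‖ ≤ _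
        rw [smul_apply, norm_smul]
        exact mul_le_mul_of_nonneg_left
          (le_csSup (bddAbove_image P) ⟨x, hx, rfl⟩) (norm_nonneg c)
      · exact mul_nonneg (norm_nonneg c) (polyNorm_coe_nonneg P) }

end HPoly



/-! If `A` is an `r`-linear generator of `R`, then `R ∘ P ∘ B = A (P ∘ B, …, P ∘ B)`, and
`(P₁, …, P_r) ↦ A (P₁ ∘ B, …, P_r ∘ B)` is a bounded `r`-linear map into `𝒫(^{mrs}E₁;F)`: its
values are polynomials because a continuous multilinear map applied to homogeneous polynomials of a
common degree is generated by the block composition of the generators. The norm estimate is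
`‖Q x‖ ≤ ‖Q‖ ‖x‖ ^ deg Q`, applied to `R`, `P` and `B`. -/

section

variable {𝕜 : Type*} [RCLike 𝕜] {E F G H : Type*}
  [NormedAddCommGroup E] [NormedSpace 𝕜 E] [NormedAddCommGroup F] [NormedSpace 𝕜 F]
  [NormedAddCommGroup G] [NormedSpace 𝕜 G] [NormedAddCommGroup H] [NormedSpace 𝕜 H]

/-- With generators `Aᵢ` of the `gᵢ`, the generator is the block composition
`f (A₁ (x₁₁, …, x₁ₙ), …, A_k (x_k₁, …, x_kₙ))`, reindexed from `Σ _ : Fin k, Fin n` to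
`Fin (k * n)`. -/
theorem ContinuousMultilinearMap.isHomPoly_comp {k n : ℕ}
    (f : ContinuousMultilinearMap 𝕜 (fun _ : Fin k => G) H) {g : Fin k → E → G}
    (hg : ∀ i, IsHomPoly 𝕜 n (g i)) :
    IsHomPoly 𝕜 (k * n) fun x => f fun i => g i x := by
  choose A hA using hg
  let blocks : ContinuousMultilinearMap 𝕜 (fun _ : (_ : Fin k) × Fin n => E) H :=
    { f.toMultilinearMap.compMultilinearMap fun i => (A i).toMultilinearMap with
      cont := f.cont.comp <| continuous_pi fun i =>
        (A i).cont.comp <| continuous_pi fun _ => continuous_apply _ }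
  refine ⟨blocks.domDomCongr ((Equiv.sigmaEquivProd _ _).trans finProdFinEquiv), fun x => ?_⟩
  simp only [hA]
  rfl

namespace HPoly

@[simp] theorem coe_mk {m : ℕ} (f : E → F) (hf : IsHomPoly 𝕜 m f) :
    ⇑(⟨f, hf⟩ : HPoly 𝕜 m E F) = f := rfl

variable {m s : ℕ}

theorem map_smul (P : HPoly 𝕜 m E F) (c : 𝕜) (x : E) : P (c • x) = c ^ m • P x := by
  obtain ⟨A, hA⟩ := P.isPoly
  simpa [hA] using A.map_smul_univ (fun _ => c) fun _ => x

theorem norm_apply_le_of_norm_le_one (P : HPoly 𝕜 m E F) {x : E} (hx : ‖x‖ ≤ 1) :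
    ‖P x‖ ≤ ‖P‖ :=
  le_csSup P.bddAbove_image ⟨x, hx, rfl⟩

theorem norm_le_of_unit_ball {P : HPoly 𝕜 m E F} {C : ℝ} (h : ∀ x : E, ‖x‖ ≤ 1 → ‖P x‖ ≤ C) :
    ‖P‖ ≤ C :=
  csSup_le ⟨_, 0, by simp, rfl⟩ <| by rintro _ ⟨x, hx, rfl⟩; exact h x hx

theorem norm_apply_le (P : HPoly 𝕜 m E F) (x : E) : ‖P x‖ ≤ ‖P‖ * ‖x‖ ^ m := by
  set u : E := ((‖x‖ : 𝕜))⁻¹ • x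
  have hu : ‖u‖ ≤ 1 := by
    rcases eq_or_ne x 0 with rfl | hx
    · simp [u]
    · exact (norm_smul_inv_norm hx).le
  have hxu : x = (‖x‖ : 𝕜) • u := by
    rcases eq_or_ne x 0 with rfl | hx
    · simp
    · rw [smul_inv_smul₀ (by simpa using hx)]
  calc ‖P x‖ = ‖x‖ ^ m * ‖P u‖ := by
        rw [hxu, map_smul, norm_smul, norm_pow, RCLike.norm_ofReal, abs_norm, ← hxu]
    _ ≤ ‖P‖ * ‖x‖ ^ m := by
        rw [mul_comm]; gcongr; exact P.norm_apply_le_of_norm_le_one hu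

theorem norm_apply_comp_le (P : HPoly 𝕜 m F G) (B : HPoly 𝕜 s E F) {x : E} (hx : ‖x‖ ≤ 1) :
    ‖P (B x)‖ ≤ ‖P‖ * ‖B‖ ^ m :=
  calc ‖P (B x)‖ ≤ ‖P‖ * ‖B x‖ ^ m := P.norm_apply_le _
    _ ≤ ‖P‖ * ‖B‖ ^ m := by gcongr; exact B.norm_apply_le_of_norm_le_one hx

end HPoly

namespace ContinuousMultilinearMap

variable {k m s d : ℕ}

/-- The values have degree `k * (m * s)`; the target degree is a parameter `d` so that no
transport along `hd` is needed. -/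
noncomputable def compHPoly (A : ContinuousMultilinearMap 𝕜 (fun _ : Fin k => G) H)
    (B : HPoly 𝕜 s E F) (hd : k * (m * s) = d) :
    ContinuousMultilinearMap 𝕜 (fun _ : Fin k => HPoly 𝕜 m F G) (HPoly 𝕜 d E H) :=
  MultilinearMap.mkContinuous
    { toFun := fun Pv => ⟨fun x => A fun i => Pv i (B x), hd ▸ A.isHomPoly_comp fun i => by
          obtain ⟨AP, hAP⟩ := (Pv i).isPoly
          simpa only [← hAP] using AP.isHomPoly_comp fun _ => B.isPoly⟩
      map_update_add' := fun Pv j P Q => by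
        ext x
        simp [Function.apply_update (fun _ (P : HPoly 𝕜 m F G) => P (B x))]
      map_update_smul' := fun Pv j c P => by
        ext x
        simp [Function.apply_update (fun _ (P : HPoly 𝕜 m F G) => P (B x))] }
    (‖A‖ * ‖B‖ ^ (m * k)) fun Pv => HPoly.norm_le_of_unit_ball fun x hx =>
      calc ‖A fun i => Pv i (B x)‖ ≤ ‖A‖ * ∏ i, ‖Pv i (B x)‖ := A.le_opNorm _
        _ ≤ ‖A‖ * ∏ i, (‖Pv i‖ * ‖B‖ ^ m) := by
            gcongr with i; exact (Pv i).norm_apply_comp_le B hx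
        _ = ‖A‖ * ‖B‖ ^ (m * k) * ∏ i, ‖Pv i‖ := by
            rw [Finset.prod_mul_distrib, Finset.prod_const, Finset.card_fin, pow_mul]; ring

@[simp] theorem compHPoly_apply (A : ContinuousMultilinearMap 𝕜 (fun _ : Fin k => G) H)
    (B : HPoly 𝕜 s E F) (hd : k * (m * s) = d) (Pv : Fin k → HPoly 𝕜 m F G) (x : E) :
    A.compHPoly B hd Pv x = A fun i => Pv i (B x) := rfl

end ContinuousMultilinearMap

end

theorem statement19_general (𝕜 : Type*) [RCLike 𝕜] (E F E₁ F₁ : Type*)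
    [NormedAddCommGroup E] [NormedSpace 𝕜 E]
    [NormedAddCommGroup F] [NormedSpace 𝕜 F]
    [NormedAddCommGroup E₁] [NormedSpace 𝕜 E₁]
    [NormedAddCommGroup F₁] [NormedSpace 𝕜 F₁]
    (m r s : ℕ)
    (R : HPoly 𝕜 r E F) (B : HPoly 𝕜 s E₁ F₁) :
    ∃ S : HPoly 𝕜 m F₁ E → HPoly 𝕜 (m * r * s) E₁ F,
      (∀ (P : HPoly 𝕜 m F₁ E) (x : E₁), S P x = R (P (B x))) ∧
      IsHomPoly 𝕜 r S ∧
      ∀ P : HPoly 𝕜 m F₁ E, ‖S P‖ ≤ ‖R‖ * ‖P‖ ^ r * ‖B‖ ^ (m * r) := by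
  obtain ⟨A, hA⟩ := R.isPoly
  let SRB := A.compHPoly B (m := m) (show r * (m * s) = m * r * s by ring)
  refine ⟨fun P => SRB fun _ => P, fun P x => (hA _).symm, ⟨SRB, fun _ => rfl⟩, fun P => ?_⟩
  refine HPoly.norm_le_of_unit_ball fun x hx => ?_
  calc ‖SRB (fun _ => P) x‖ = ‖R (P (B x))‖ := by simp [SRB, hA]
    _ ≤ ‖R‖ * ‖P (B x)‖ ^ r := R.norm_apply_le _
    _ ≤ ‖R‖ * (‖P‖ * ‖B‖ ^ m) ^ r := by gcongr; exact P.norm_apply_comp_le B hx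
    _ = ‖R‖ * ‖P‖ ^ r * ‖B‖ ^ (m * r) := by ring

/-- For `R ∈ 𝒫(^rE;F)` and `B ∈ 𝒫(^sE₁;F₁)`, the composition map
`S_{RB} : 𝒫(^mF₁;E) → 𝒫(^{mrs}E₁;F)`, `S_{RB} P = R ∘ P ∘ B`, is a well-defined continuous
`r`-homogeneous polynomial with `‖S_{RB} P‖ ≤ ‖R‖ ⬝ ‖P‖^r ⬝ ‖B‖^{mr}`. -/
theorem statement19 (𝕜 : Type*) [RCLike 𝕜] (E F E₁ F₁ : Type*)
    [NormedAddCommGroup E] [NormedSpace 𝕜 E] [CompleteSpace E]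
    [NormedAddCommGroup F] [NormedSpace 𝕜 F] [CompleteSpace F]
    [NormedAddCommGroup E₁] [NormedSpace 𝕜 E₁] [CompleteSpace E₁]
    [NormedAddCommGroup F₁] [NormedSpace 𝕜 F₁] [CompleteSpace F₁]
    (m r s : ℕ) (hm : 1 ≤ m) (hr : 1 ≤ r) (hs : 1 ≤ s)
    (R : HPoly 𝕜 r E F) (B : HPoly 𝕜 s E₁ F₁) :
    ∃ S : HPoly 𝕜 m F₁ E → HPoly 𝕜 (m * r * s) E₁ F,
      (∀ (P : HPoly 𝕜 m F₁ E) (x : E₁), S P x = R (P (B x))) ∧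
      IsHomPoly 𝕜 r S ∧
      ∀ P : HPoly 𝕜 m F₁ E, ‖S P‖ ≤ ‖R‖ * ‖P‖ ^ r * ‖B‖ ^ (m * r) :=
  statement19_general 𝕜 E F E₁ F₁ m r s R B
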